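/- Let f be a formal power series over ℚ with f(0)=0, f'(0)=1, and let φ = Rev(x²/f(x)). If (x²/f(x)) composed with itself under the substitution x ↦ -x satisfies x²/f(x) = Rev(x²/(-f(-x))), then the compositional inverse of φ equals -φ(-x). -/

import Mathlib

/-!
`φ` is a right inverse of `q = x²/f` and, by hypothesis, `r = x²/(-f(-x))` is a left inverse
of `q`, so `φ = r` (associativity of `psComp` comes from identifying it with `PowerSeries.subst`). Cancelling `-f(-x)` in `r · (-f(-x)) = x² = (-q(-x)) · (-f(-x))` gives
`r = -q(-x)`, hence `-φ(-x) = q` and `φ ∘ (-φ(-x)) = r ∘ q = x`.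
-/

open PowerSeries

/-- Composition `f ∘ a` of formal power series (intended for `a` with zero constant term). -/
noncomputable def psComp {R : Type*} [CommRing R] (f a : R⟦X⟧) : R⟦X⟧ :=
  PowerSeries.mk fun n => ∑ i ∈ Finset.range (n + 1), PowerSeries.coeff i f * PowerSeries.coeff n (a ^ i)

section Composition

variable {R : Type*} [CommRing R]

theorem coeff_pow_eq_zero_of_lt {a : R⟦X⟧} (ha : constantCoeff a = 0) {n i : ℕ} (h : n < i) :
    coeff n (a ^ i) = 0 :=
  X_pow_dvd_iff.mp (pow_dvd_pow_of_dvd (X_dvd_iff.mpr ha) i) n h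

theorem psComp_eq_subst {a : R⟦X⟧} (ha : constantCoeff a = 0) (f : R⟦X⟧) :
    psComp f a = f.subst a := by
  ext n
  rw [coeff_subst' (HasSubst.of_constantCoeff_zero' ha), psComp, coeff_mk,
    finsum_eq_sum_of_support_subset (s := Finset.range (n + 1))]
  · simp only [smul_eq_mul]
  · intro i hi
    by_contra hin
    simp only [Finset.coe_range, Set.mem_Iio, not_lt] at hin
    exact hi (show coeff i f • coeff n (a ^ i) = 0 by
      rw [coeff_pow_eq_zero_of_lt ha (by omega), smul_zero])

theorem psComp_psComp {a b : R⟦X⟧} (ha : constantCoeff a = 0) (hb : constantCoeff b = 0)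
    (f : R⟦X⟧) : psComp (psComp f a) b = psComp f (psComp a b) := by
  have hab : constantCoeff (psComp a b) = 0 := by
    rw [psComp_eq_subst hb]
    exact constantCoeff_subst_eq_zero hb a ha
  rw [psComp_eq_subst hab, psComp_eq_subst ha, psComp_eq_subst hb, psComp_eq_subst hb,
    subst_comp_subst_apply (HasSubst.of_constantCoeff_zero' ha)
      (HasSubst.of_constantCoeff_zero' hb)]

theorem psComp_X_left {a : R⟦X⟧} (ha : constantCoeff a = 0) : psComp X a = a := by
  rw [psComp_eq_subst ha, subst_X (HasSubst.of_constantCoeff_zero' ha)]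

theorem psComp_X_right (f : R⟦X⟧) : psComp f X = f := by
  rw [psComp_eq_subst constantCoeff_X, X_subst]

theorem eq_of_psComp_eq_X {r q φ : R⟦X⟧} (hq : constantCoeff q = 0) (hφ0 : constantCoeff φ = 0)
    (hrq : psComp r q = X) (hqφ : psComp q φ = X) : φ = r := by
  calc φ = psComp (psComp r q) φ := by rw [hrq, psComp_X_left hφ0]
    _ = psComp r (psComp q φ) := psComp_psComp hq hφ0 r
    _ = r := by rw [hqφ, psComp_X_right]

end Composition

theorem eq_neg_rescale_of_mul_eq_X_sq {R : Type*} [CommRing R] [IsDomain R] {q f r : R⟦X⟧}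
    (hq : q * f = X ^ 2) (hr : r * -rescale (-1) f = X ^ 2) : r = -rescale (-1) q := by
  have hf : -rescale (-1) f ≠ 0 := by
    rintro h
    rw [h, mul_zero] at hr
    exact pow_ne_zero 2 X_ne_zero hr.symm
  refine mul_right_cancel₀ hf (hr.trans ?_)
  rw [neg_mul_neg, ← map_mul, hq, map_pow, rescale_neg_one_X, neg_sq]

theorem neg_rescale_neg_one_neg_rescale_neg_one {R : Type*} [CommRing R] (f : R⟦X⟧) :
    -rescale (-1) (-rescale (-1) f) = f := by
  rw [map_neg, neg_neg, rescale_rescale, neg_one_mul, neg_neg, rescale_one, RingHom.id_apply]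

theorem stmt6_general (f q φ r : ℚ⟦X⟧)
    (hq : q * f = X ^ 2) (hq0 : PowerSeries.constantCoeff q = 0)
    (hφ0 : PowerSeries.constantCoeff φ = 0)
    (hφ : psComp q φ = X)
    (hr : r * (-(PowerSeries.rescale (-1) f)) = X ^ 2)
    (hcond : psComp r q = X) :
    psComp φ (-(PowerSeries.rescale (-1) φ)) = X := by
  have hφr : φ = r := eq_of_psComp_eq_X hq0 hφ0 hcond hφ
  have hrq : r = -rescale (-1) q := eq_neg_rescale_of_mul_eq_X_sq hq hr
  rw [hφr, hrq, neg_rescale_neg_one_neg_rescale_neg_one, ← hrq]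
  exact hcond

theorem stmt6 (f q φ r : ℚ⟦X⟧)
    (hf0 : PowerSeries.constantCoeff f = 0)
    (hf1 : PowerSeries.coeff 1 f = 1)
    (hq : q * f = X ^ 2) (hq0 : PowerSeries.constantCoeff q = 0)
    (hφ0 : PowerSeries.constantCoeff φ = 0)
    (hφ : psComp q φ = X)
    (hr : r * (-(PowerSeries.rescale (-1) f)) = X ^ 2)
    (hr0 : PowerSeries.constantCoeff r = 0)
    (hcond : psComp r q = X) :
    psComp φ (-(PowerSeries.rescale (-1) φ)) = X :=
  stmt6_general f q φ r hq hq0 hφ0 hφ hr hcond
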